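/- arXiv:math/0405084 — 4 statements merged into one kernel-verified Lean document; each statement's English description precedes it below -/
import Mathlib

section
/- If g : S¹ → S¹ is an orientation-preserving homeomorphism, G₁, G₂ : ℝ → ℝ are two lifts of g under the covering map Π(θ) = e^{2πiθ}, and x ∈ ℝ, then the limits lim_{n→∞} G₁ⁿ(x)/n and lim_{n→∞} G₂ⁿ(x)/n both exist and differ by an integer. -/
/-!
A strictly monotone lift `G` of a circle homeomorphism satisfies `G (θ + 1) = G θ + 1`, so it is a
`CircleDeg1Lift` and `Gⁿ x / n` tends to its translation number. Two lifts of the same map differ by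
a continuous integer-valued function, hence by a constant `m : ℤ`; since translation by an integer
commutes with every degree-one lift, their translation numbers then differ by `m`.
-/

open Filter Topology

theorem Complex.exp_two_pi_mul_I_eq_exp_iff (a b : ℝ) :
    exp (2 * Real.pi * a * I) = exp (2 * Real.pi * b * I) ↔ ∃ m : ℤ, a = b + m := by
  have h2πI : (2 * Real.pi * I : ℂ) ≠ 0 := by simp [Real.pi_ne_zero, I_ne_zero]
  rw [exp_eq_exp_iff_exists_int]
  refine exists_congr fun m => ?_
  calc _ ↔ (2 * Real.pi * I) * (a : ℂ) = (2 * Real.pi * I) * (b + m) := by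
          constructor <;> intro h <;> linear_combination h
    _ ↔ (a : ℂ) = b + m := mul_right_inj' h2πI
    _ ↔ a = b + m := by norm_cast

section IntegerFibres

variable {X : Type*} {P : ℝ → X} (hP : ∀ a b, P a = P b ↔ ∃ m : ℤ, a = b + m)
include hP

theorem lift_add_one {g : X → X} (hg : Function.Injective g) {G : ℝ → ℝ} (hG : StrictMono G)
    (hGs : Function.Surjective G) (hlift : ∀ θ, P (G θ) = g (P θ)) (θ : ℝ) :
    G (θ + 1) = G θ + 1 := by
  have hP_add_one : ∀ a, P (a + 1) = P a := fun a => (hP _ _).2 ⟨1, by simp⟩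
  obtain ⟨k, hk⟩ := (hP (G (θ + 1)) (G θ)).1 (by rw [hlift, hlift, hP_add_one])
  obtain ⟨θ', hθ'⟩ := hGs (G θ + 1)
  obtain ⟨j, hj⟩ := (hP θ' θ).1 (hg (by rw [← hlift, ← hlift, hθ', hP_add_one]))
  have hk_pos : (0 : ℤ) < k := by
    have := hG (lt_add_one θ)
    exact_mod_cast (by linarith : (0 : ℝ) < k)
  have hj_pos : (0 : ℤ) < j := by
    have := hG.lt_iff_lt.1 (hθ' ▸ lt_add_one (G θ))
    exact_mod_cast (by linarith : (0 : ℝ) < j)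
  -- `θ + 1 ≤ θ'`, so `G θ + k = G (θ + 1) ≤ G θ' = G θ + 1`.
  have hle : G (θ + 1) ≤ G θ' := hG.monotone (by rw [hj]; gcongr; exact_mod_cast hj_pos)
  have hk_one : k = 1 := by
    have : (k : ℝ) ≤ 1 := by linarith
    have : k ≤ 1 := by exact_mod_cast this
    omega
  rw [hk, hk_one, Int.cast_one]

theorem exists_int_forall_eq_add_of_comp_eq {G₁ G₂ : ℝ → ℝ} (hG₁ : Continuous G₁)
    (hG₂ : Continuous G₂) (h : ∀ θ, P (G₁ θ) = P (G₂ θ)) :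
    ∃ m : ℤ, ∀ θ, G₁ θ = G₂ θ + m := by
  have hmaps : Set.MapsTo (fun θ => G₁ θ - G₂ θ) Set.univ (Set.range ((↑) : ℤ → ℝ)) :=
    fun θ _ => by
      obtain ⟨m, hm⟩ := (hP _ _).1 (h θ)
      exact ⟨m, by simp [hm]⟩
  obtain ⟨m, hm⟩ := hmaps (Set.mem_univ 0)
  refine ⟨m, fun θ => ?_⟩
  have := isPreconnected_univ.constant_of_mapsTo
    Int.isClosedEmbedding_coe_real.isInducing.isDiscrete_range (hG₁.sub hG₂).continuousOn hmaps
    (Set.mem_univ θ) (Set.mem_univ 0)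
  simp only [Pi.sub_apply] at this
  linarith

end IntegerFibres

namespace CircleDeg1Lift

theorem tendsto_iterate_div_translationNumber (f : CircleDeg1Lift) (x : ℝ) :
    Tendsto (fun n : ℕ => f^[n] x / n) atTop (𝓝 f.translationNumber) := by
  have hx : Tendsto (fun n : ℕ => x / (n : ℝ)) atTop (𝓝 0) :=
    tendsto_const_nhds.div_atTop tendsto_natCast_atTop_atTop
  refine (add_zero f.translationNumber ▸ (f.tendsto_translationNumber x).add hx).congr fun n => ?_
  rw [coe_pow]
  ring

theorem translationNumber_eq_add_int {f g : CircleDeg1Lift} {m : ℤ} (h : ∀ x, f x = g x + m) :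
    f.translationNumber = g.translationNumber + m := by
  have hf : f = translate (Multiplicative.ofAdd (m : ℝ)) * g :=
    ext fun x => by rw [h, mul_apply, translate_apply, add_comm]
  have hcomm : Commute (translate (Multiplicative.ofAdd (m : ℝ)) : CircleDeg1Lift) g :=
    commute_iff_commute.2 (g.commute_int_add m).symm
  rw [hf, translationNumber_mul_of_commute hcomm, translationNumber_translate, add_comm]

end CircleDeg1Lift

/-- Two lifts of an orientation-preserving circle homeomorphism give rotation
number limits that exist and differ by an integer. -/
theorem stmt0
    (g : Metric.sphere (0:ℂ) 1 ≃ₜ Metric.sphere (0:ℂ) 1)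
    (P : ℝ → Metric.sphere (0:ℂ) 1)
    (hP : ∀ θ : ℝ, (P θ : ℂ) = Complex.exp (2 * Real.pi * θ * Complex.I))
    (G₁ G₂ : ℝ ≃ₜ ℝ)
    (hmono₁ : StrictMono G₁) (hmono₂ : StrictMono G₂)
    (hlift₁ : ∀ θ : ℝ, P (G₁ θ) = g (P θ))
    (hlift₂ : ∀ θ : ℝ, P (G₂ θ) = g (P θ))
    (x : ℝ) :
    ∃ L₁ L₂ : ℝ,
      Tendsto (fun n : ℕ => (⇑G₁)^[n] x / (n : ℝ)) atTop (𝓝 L₁) ∧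
      Tendsto (fun n : ℕ => (⇑G₂)^[n] x / (n : ℝ)) atTop (𝓝 L₂) ∧
      ∃ m : ℤ, L₁ - L₂ = (m : ℝ) := by
  have hP_eq : ∀ a b, P a = P b ↔ ∃ m : ℤ, a = b + m := fun a b => by
    rw [Subtype.ext_iff, hP, hP, Complex.exp_two_pi_mul_I_eq_exp_iff]
  let f₁ : CircleDeg1Lift :=
    ⟨⟨G₁, hmono₁.monotone⟩, lift_add_one hP_eq g.injective hmono₁ G₁.surjective hlift₁⟩
  let f₂ : CircleDeg1Lift :=
    ⟨⟨G₂, hmono₂.monotone⟩, lift_add_one hP_eq g.injective hmono₂ G₂.surjective hlift₂⟩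
  obtain ⟨m, hm⟩ := exists_int_forall_eq_add_of_comp_eq hP_eq G₁.continuous G₂.continuous
    fun θ => by rw [hlift₁, hlift₂]
  refine ⟨f₁.translationNumber, f₂.translationNumber, f₁.tendsto_iterate_div_translationNumber x,
    f₂.tendsto_iterate_div_translationNumber x, m, ?_⟩
  rw [CircleDeg1Lift.translationNumber_eq_add_int (f := f₁) (g := f₂) hm]
  ring
end

section
/- If G : ℝ → ℝ is a strictly increasing homeomorphism commuting with translation by 1 (i.e., G(x+1) = G(x)+1 for all x), then for every x, y ∈ ℝ the limits lim_{n→∞} Gⁿ(x)/n and lim_{n→∞} Gⁿ(y)/n exist and are equal. -/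
open Filter Topology

theorem CircleDeg1Lift.tendsto_iterate_div_translationNumber_s3 (f : CircleDeg1Lift) (x : ℝ) :
    Tendsto (fun n : ℕ => (⇑f)^[n] x / n) atTop (𝓝 f.translationNumber) := by
  have hx : Tendsto (fun n : ℕ => x / n) atTop (𝓝 0) :=
    tendsto_const_nhds.div_atTop tendsto_natCast_atTop_atTop
  simpa [← f.coe_pow, sub_div] using (f.tendsto_translationNumber x).add hx

/-- For a strictly increasing homeomorphism of `ℝ` commuting with the unit
translation, the limits `Gⁿ(x)/n` exist and are independent of the base
point. -/
theorem stmt3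
    (G : ℝ ≃ₜ ℝ)
    (hmono : StrictMono G)
    (hcomm : ∀ x : ℝ, G (x + 1) = G x + 1)
    (x y : ℝ) :
    ∃ L : ℝ,
      Tendsto (fun n : ℕ => (⇑G)^[n] x / (n : ℝ)) atTop (𝓝 L) ∧
      Tendsto (fun n : ℕ => (⇑G)^[n] y / (n : ℝ)) atTop (𝓝 L) := by
  let f : CircleDeg1Lift := ⟨⟨G, hmono.monotone⟩, hcomm⟩
  exact ⟨f.translationNumber, f.tendsto_iterate_div_translationNumber_s3 x,
    f.tendsto_iterate_div_translationNumber_s3 y⟩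
end

section
/- Suppose A is a collection of at least 3 pairwise disjoint connected subsets of S¹ with dense union, each member equal to a point or an open interval, and h : A → A is an order preserving bijection. If g₁ and g₂ are orientation-preserving homeomorphisms of S¹ each compatible with h (gᵢ(J) = h(J) for all J ∈ A), then rot(g₁) = rot(g₂). -/
/-!
Let `B = remainder A` be the complement of the union of the open members of `A`. It is
nonempty, since otherwise the connected circle would split into at least two disjoint open
members, and `g₂` maps it into itself. The maps `g₁` and `g₂` agree on `B`: at a singleton
member `{x}` because `g₁ '' {x} = g₂ '' {x}`, and at an endpoint of an open member `J` because
on the line both lifts carry a gap of `P ⁻¹' J` to a gap of `P ⁻¹' h J`, and two such gaps are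
integer translates of each other; by density these points accumulate at every point of `B`.
So `G₁ - G₂` is an integer on `P ⁻¹' B`, the same integer `m` everywhere since two increasing
degree-one lifts cannot differ by two distinct integers. Along the `G₂`-orbit of a point over
`B` this gives `G₁ⁿ = G₂ⁿ + n m`, hence the translation numbers differ by `m`.
-/

open Metric Filter Topology Set Function

structure IsGap (W : Set ℝ) (a b : ℝ) : Prop where
  lt : a < b
  left_notMem : a ∉ W
  right_notMem : b ∉ W
  Ioo_subset : Ioo a b ⊆ W

theorem exists_isGap {W : Set ℝ} (hW : IsOpen W) {t u t' : ℝ} (hu : u ∈ W) (ht : t ∉ W)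
    (ht' : t' ∉ W) (htu : t ≤ u) (hut' : u ≤ t') :
    ∃ a b, IsGap W a b ∧ t ≤ a ∧ a < u ∧ u < b ∧ b ≤ t' := by
  have hbdd : BddAbove (Icc t u ∩ Wᶜ) := ⟨u, fun s hs ↦ hs.1.2⟩
  have hbdd' : BddBelow (Icc u t' ∩ Wᶜ) := ⟨u, fun s hs ↦ hs.1.1⟩
  have ha := (isClosed_Icc.inter hW.isClosed_compl).csSup_mem ⟨t, ⟨le_rfl, htu⟩, ht⟩ hbdd
  have hb :=
    (isClosed_Icc.inter hW.isClosed_compl).csInf_mem ⟨t', ⟨hut', le_rfl⟩, ht'⟩ hbdd'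
  have hau : sSup (Icc t u ∩ Wᶜ) < u := ha.1.2.lt_of_ne fun h ↦ ha.2 (by rwa [h])
  have hub : u < sInf (Icc u t' ∩ Wᶜ) := hb.1.1.lt_of_ne' fun h ↦ hb.2 (by rwa [h])
  refine ⟨_, _, ⟨hau.trans hub, ha.2, hb.2, fun s hs ↦ ?_⟩, ha.1.1, hau, hub, hb.1.2⟩
  by_contra hsW
  rcases le_total s u with hsu | hus
  · exact hs.1.not_ge (le_csSup hbdd ⟨⟨ha.1.1.trans hs.1.le, hsu⟩, hsW⟩)
  · exact hs.2.not_ge (csInf_le hbdd' ⟨⟨hus, hs.2.le.trans hb.1.2⟩, hsW⟩)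

namespace IsGap

theorem eq_of_ordConnected {W : Set ℝ} {a b a' b' c : ℝ} (h : IsGap W a b)
    (h' : IsGap W a' b') (hW : (W ∩ Ioo a c).OrdConnected) (ha' : a' ∈ Ico a c) :
    a = a' ∧ b = b' := by
  obtain rfl : a = a' := by
    refine ha'.1.eq_or_lt.resolve_right fun hlt ↦ ?_
    rcases lt_or_ge a' b with hab | hba
    · exact h'.left_notMem (h.Ioo_subset ⟨hlt, hab⟩)
    -- `b` lies between a point of each gap, both in the order-connected set `W ∩ Ioo a c`
    have hm : (a + b) / 2 ∈ W ∩ Ioo a c :=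
      ⟨h.Ioo_subset ⟨by linarith [h.lt], by linarith [h.lt]⟩, by linarith [h.lt],
        by linarith [ha'.2]⟩
    have hm' : (a' + min b' c) / 2 ∈ W ∩ Ioo a c := by
      have := lt_min h'.lt ha'.2
      exact ⟨h'.Ioo_subset ⟨by linarith, by linarith [min_le_left b' c]⟩, by linarith,
        by linarith [min_le_right b' c]⟩
    have hb : b ∈ Icc ((a + b) / 2) ((a' + min b' c) / 2) :=
      ⟨by linarith [h.lt], by linarith [lt_min h'.lt ha'.2]⟩
    exact h.right_notMem (hW.out hm hm' hb).1
  refine ⟨rfl, ?_⟩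
  rcases lt_trichotomy b b' with hlt | heq | hgt
  · exact absurd (h'.Ioo_subset ⟨h.lt, hlt⟩) h.right_notMem
  · exact heq
  · exact absurd (h.Ioo_subset ⟨h'.lt, hgt⟩) h'.right_notMem

variable {X : Type*} {P : ℝ → X} {M : Set X} {a b : ℝ}

theorem add_period (h : IsGap (P ⁻¹' M) a b) {c : ℝ} (hP : Periodic P c) :
    IsGap (P ⁻¹' M) (a + c) (b + c) where
  lt := by linarith [h.lt]
  left_notMem := by simpa only [mem_preimage, hP a] using h.left_notMem
  right_notMem := by simpa only [mem_preimage, hP b] using h.right_notMem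
  Ioo_subset s hs := by
    have := h.Ioo_subset (⟨by linarith [hs.1], by linarith [hs.2]⟩ : s - c ∈ Ioo a b)
    rwa [mem_preimage, hP.sub_eq] at this

theorem image {G : ℝ → ℝ} (hG : StrictMono G) (hGs : Surjective G) {g : X → X}
    (hg : Injective g) (hlift : Semiconj P G g) (h : IsGap (P ⁻¹' M) a b) :
    IsGap (P ⁻¹' (g '' M)) (G a) (G b) where
  lt := hG h.lt
  left_notMem := by rw [mem_preimage, hlift a, hg.mem_set_image]; exact h.left_notMem
  right_notMem := by rw [mem_preimage, hlift b, hg.mem_set_image]; exact h.right_notMem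
  Ioo_subset t ht := by
    obtain ⟨s, rfl⟩ := hGs t
    rw [mem_preimage, hlift s]
    exact mem_image_of_mem g (h.Ioo_subset ⟨hG.lt_iff_lt.1 ht.1, hG.lt_iff_lt.1 ht.2⟩)

end IsGap

def remainder {X : Type*} [TopologicalSpace X] (A : Set (Set X)) : Set X :=
  (⋃₀ {J ∈ A | IsOpen J})ᶜ

section Remainder

variable {X : Type*} [TopologicalSpace X] {A : Set (Set X)}

theorem mapsTo_remainder {h : Set X → Set X} (hsurj : SurjOn h A A) {g : X ≃ₜ X}
    (hcomp : ∀ J ∈ A, g '' J = h J) : MapsTo g (remainder A) (remainder A) := by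
  rintro z hz ⟨K, ⟨hKA, hKo⟩, hzK⟩
  obtain ⟨J, hJA, rfl⟩ := hsurj hKA
  rw [← hcomp J hJA] at hKo hzK
  exact hz ⟨J, ⟨hJA, g.isOpen_image.1 hKo⟩, g.injective.mem_set_image.1 hzK⟩

theorem remainder_nonempty [ConnectedSpace X] (hdisj : A.PairwiseDisjoint id)
    (hne : ∀ J ∈ A, J.Nonempty) {J₁ J₂ : Set X} (h₁ : J₁ ∈ A) (h₂ : J₂ ∈ A) (h₁₂ : J₁ ≠ J₂) :
    (remainder A).Nonempty := by
  by_contra hempty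
  have hcov : ∀ z, ∃ K ∈ A, IsOpen K ∧ z ∈ K := by
    by_contra! hz
    obtain ⟨z, hz⟩ := hz
    exact hempty ⟨z, fun ⟨K, ⟨hKA, hKo⟩, hzK⟩ ↦ hz K hKA hKo hzK⟩
  have heq : ∀ K ∈ A, ∀ z ∈ K, z ∈ J₁ → K = J₁ := fun K hKA z hzK hz ↦
    hdisj.elim hKA h₁ (not_disjoint_iff.2 ⟨z, hzK, hz⟩)
  -- the open members through the points of `J₁`, and through those outside it,
  -- make `J₁` clopen
  have hclopen : IsClopen J₁ := by
    refine ⟨?_, isOpen_iff_forall_mem_open.2 fun z hz ↦ ?_⟩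
    · refine isOpen_compl_iff.1 (isOpen_iff_forall_mem_open.2 fun z hz ↦ ?_)
      obtain ⟨K, hKA, hKo, hzK⟩ := hcov z
      exact ⟨K, fun y hyK hy ↦ hz (heq K hKA y hyK hy ▸ hzK), hKo, hzK⟩
    · obtain ⟨K, hKA, hKo, hzK⟩ := hcov z
      exact ⟨K, (heq K hKA z hzK hz).le, hKo, hzK⟩
  obtain ⟨z, hz⟩ := hne J₂ h₂
  have hz₁ : z ∈ J₁ := hclopen.eq_univ (hne J₁ h₁) ▸ mem_univ z
  exact h₁₂ (heq J₂ h₂ z hz hz₁).symm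

end Remainder

def IsExpCover (P : ℝ → sphere (0:ℂ) 1) : Prop :=
  ∀ θ : ℝ, (P θ : ℂ) = Complex.exp (2 * Real.pi * θ * Complex.I)

namespace IsExpCover

variable {P : ℝ → sphere (0:ℂ) 1} (hP : IsExpCover P)
include hP

theorem exists_homeomorph :
    ∃ e : AddCircle (1:ℝ) ≃ₜ sphere (0:ℂ) 1, P = e ∘ ((↑) : ℝ → AddCircle (1:ℝ)) := by
  refine ⟨AddCircle.homeomorphCircle one_ne_zero, funext fun θ ↦ Subtype.ext ?_⟩
  change _ = ((AddCircle.homeomorphCircle one_ne_zero (θ : AddCircle (1:ℝ)) : Circle) : ℂ)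
  rw [hP θ, AddCircle.homeomorphCircle_apply, AddCircle.toCircle_apply_mk, Circle.coe_exp]
  push_cast
  ring_nf

theorem continuous : Continuous P := by
  obtain ⟨e, rfl⟩ := hP.exists_homeomorph
  fun_prop

theorem isOpenMap : IsOpenMap P := by
  obtain ⟨e, rfl⟩ := hP.exists_homeomorph
  exact e.isOpenMap.comp QuotientAddGroup.isOpenMap_coe

theorem surjective : Surjective P := by
  obtain ⟨e, rfl⟩ := hP.exists_homeomorph
  exact e.surjective.comp QuotientAddGroup.mk_surjective

theorem eq_iff {s t : ℝ} : P s = P t ↔ ∃ k : ℤ, s = t + k := by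
  obtain ⟨e, rfl⟩ := hP.exists_homeomorph
  rw [comp_apply, comp_apply, e.injective.eq_iff, QuotientAddGroup.eq,
    AddSubgroup.mem_zmultiples_iff]
  constructor
  · rintro ⟨k, hk⟩
    exact ⟨-k, by simp only [zsmul_eq_mul, mul_one] at hk; push_cast; linarith⟩
  · rintro ⟨k, rfl⟩
    exact ⟨-k, by simp⟩

theorem periodic_int (k : ℤ) : Periodic P k := fun _ ↦ hP.eq_iff.2 ⟨k, rfl⟩

theorem injOn_Ico (l : ℝ) : InjOn P (Ico l (l + 1)) := by
  obtain ⟨e, rfl⟩ := hP.exists_homeomorph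
  exact fun s hs t ht hst ↦ (AddCircle.coe_eq_coe_iff_of_mem_Ico hs ht).1 (e.injective hst)

theorem exists_mem_Ico (l : ℝ) (z : sphere (0:ℂ) 1) : ∃ t ∈ Ico l (l + 1), P t = z := by
  obtain ⟨θ, rfl⟩ := hP.surjective z
  refine ⟨θ + (-⌊θ - l⌋ : ℤ), ⟨?_, ?_⟩, hP.periodic_int _ θ⟩
  · push_cast; linarith [Int.floor_le (θ - l)]
  · push_cast; linarith [Int.lt_floor_add_one (θ - l)]

theorem ordConnected_preimage_inter_Ioo {M : Set (sphere (0:ℂ) 1)} (hM : IsPreconnected M)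
    {l : ℝ} (hl : P l ∉ M) : (P ⁻¹' M ∩ Ioo l (l + 1)).OrdConnected := by
  refine ⟨fun s hs u hu t ht ↦ ⟨?_, hs.2.1.trans_le ht.1, ht.2.trans_lt hu.2.2⟩⟩
  -- otherwise `P '' Ioo l t` and `P '' Ioo t (l + 1)` would separate `M`
  by_contra htM
  have hst : s < t := ht.1.lt_of_ne (by rintro rfl; exact htM hs.1)
  have htu : t < u := ht.2.lt_of_ne (by rintro rfl; exact htM hu.1)
  have hinj := hP.injOn_Ico l
  have hsub₁ : Ioo l t ⊆ Ico l (l + 1) :=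
    fun σ hσ ↦ ⟨hσ.1.le, hσ.2.trans (htu.trans hu.2.2)⟩
  have hsub₂ : Ioo t (l + 1) ⊆ Ico l (l + 1) :=
    fun σ hσ ↦ ⟨hs.2.1.le.trans (hst.trans hσ.1).le, hσ.2⟩
  have hdisj : Disjoint (P '' Ioo l t) (P '' Ioo t (l + 1)) := by
    rw [disjoint_iff_inter_eq_empty, ← hinj.image_inter hsub₁ hsub₂,
      (Ioo_disjoint_Ioo.2 ((min_le_left _ _).trans (le_max_right _ _))).inter_eq, image_empty]
  have hcover : M ⊆ P '' Ioo l t ∪ P '' Ioo t (l + 1) := by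
    intro z hz
    obtain ⟨σ, hσ, rfl⟩ := hP.exists_mem_Ico l z
    have hσl : l < σ := hσ.1.lt_of_ne (by rintro rfl; exact hl hz)
    rcases lt_trichotomy σ t with hσt | rfl | hσt
    · exact Or.inl ⟨σ, ⟨hσl, hσt⟩, rfl⟩
    · exact absurd hz htM
    · exact Or.inr ⟨σ, ⟨hσt, hσ.2⟩, rfl⟩
  obtain ⟨σ, hσ, hσu⟩ := hM.subset_left_of_subset_union (hP.isOpenMap _ isOpen_Ioo)
    (hP.isOpenMap _ isOpen_Ioo) hdisj hcover ⟨P s, hs.1, s, ⟨hs.2.1, hst⟩, rfl⟩ hu.1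
  have := hinj (hsub₁ hσ) ⟨hu.2.1.le, hu.2.2⟩ hσu
  exact (this ▸ hσ.2).not_gt htu

theorem exists_eq_add_int_of_isGap {M : Set (sphere (0:ℂ) 1)} (hM : IsPreconnected M)
    {a b a' b' : ℝ} (h : IsGap (P ⁻¹' M) a b) (h' : IsGap (P ⁻¹' M) a' b') :
    ∃ k : ℤ, a' = a + k ∧ b' = b + k := by
  obtain ⟨ha, hb⟩ := h.eq_of_ordConnected (h'.add_period (hP.periodic_int (-⌊a' - a⌋)))
    (hP.ordConnected_preimage_inter_Ioo hM h.left_notMem)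
    ⟨by push_cast; linarith [Int.floor_le (a' - a)],
      by push_cast; linarith [Int.lt_floor_add_one (a' - a)]⟩
  push_cast at ha hb
  exact ⟨⌊a' - a⌋, by linarith, by linarith⟩

variable {g g₁ g₂ : sphere (0:ℂ) 1 ≃ₜ sphere (0:ℂ) 1} {G G₁ G₂ : ℝ ≃ₜ ℝ}

theorem map_add_one_of_semiconj (hG : StrictMono G) (hlift : Semiconj P G g) (θ : ℝ) :
    G (θ + 1) = G θ + 1 := by
  have hper : Periodic P 1 := by simpa using hP.periodic_int 1
  obtain ⟨k, hk⟩ := hP.eq_iff.1 (by rw [hlift, hlift, hper] : P (G (θ + 1)) = P (G θ))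
  have hk₀ : (0 : ℝ) < k := by linarith [hG (lt_add_one θ)]
  suffices k = 1 by rw [hk, this, Int.cast_one]
  by_contra hk₁
  have hk₂ : (2 : ℝ) ≤ k := by
    have : 0 < k := by exact_mod_cast hk₀
    exact_mod_cast (show 2 ≤ k by omega)
  -- `G θ + 1` is attained strictly inside `(θ, θ + 1)`, where `P` is injective
  obtain ⟨s, hs⟩ := G.surjective (G θ + 1)
  have hθs : θ < s := hG.lt_iff_lt.1 (by linarith)
  have hs1 : s < θ + 1 := hG.lt_iff_lt.1 (by linarith)
  have hPs : P s = P θ := g.injective (by rw [← hlift, ← hlift, hs, hper])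
  exact hθs.ne' (hP.injOn_Ico θ ⟨hθs.le, hs1⟩ ⟨le_rfl, lt_add_one θ⟩ hPs)

theorem eq_of_isGap (hG₁ : StrictMono G₁) (hG₂ : StrictMono G₂) (hlift₁ : Semiconj P G₁ g₁)
    (hlift₂ : Semiconj P G₂ g₂) {M : Set (sphere (0:ℂ) 1)} (hM : IsPreconnected M)
    (hg : g₁ '' M = g₂ '' M) {a b : ℝ} (h : IsGap (P ⁻¹' M) a b) :
    g₁ (P a) = g₂ (P a) ∧ g₁ (P b) = g₂ (P b) := by
  have h₁ := h.image hG₁ G₁.surjective g₁.injective hlift₁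
  have h₂ := h.image hG₂ G₂.surjective g₂.injective hlift₂
  rw [← hg] at h₂
  obtain ⟨k, ha, hb⟩ :=
    hP.exists_eq_add_int_of_isGap (hM.image g₁ g₁.continuous.continuousOn) h₁ h₂
  rw [← hlift₁, ← hlift₁, ← hlift₂, ← hlift₂, ha, hb, hP.periodic_int, hP.periodic_int]
  exact ⟨rfl, rfl⟩

theorem eqOn_remainder {A : Set (Set (sphere (0:ℂ) 1))} (hdense : Dense (⋃₀ A))
    (hmem : ∀ J ∈ A, (∃ x, J = {x}) ∨ (IsOpen J ∧ IsConnected J))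
    (hcomp : ∀ J ∈ A, g₁ '' J = g₂ '' J) (hG₁ : StrictMono G₁) (hG₂ : StrictMono G₂)
    (hlift₁ : Semiconj P G₁ g₁) (hlift₂ : Semiconj P G₂ g₂) : EqOn g₁ g₂ (remainder A) := by
  intro z hz
  obtain ⟨θ, rfl⟩ := hP.surjective z
  have hE : IsClosed (P ⁻¹' {z | g₁ z = g₂ z}) :=
    (isClosed_eq g₁.continuous g₂.continuous).preimage hP.continuous
  refine hE.closure_subset (Metric.mem_closure_iff.2 fun ε hε ↦ ?_)
  obtain ⟨u, ⟨M, hMA, huM⟩, huθ⟩ :=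
    (hdense.preimage hP.isOpenMap).exists_mem_open isOpen_ball ⟨θ, mem_ball_self hε⟩
  rw [mem_ball, Real.dist_eq] at huθ
  rcases hmem M hMA with ⟨x, rfl⟩ | ⟨hMo, hMc⟩
  · refine ⟨u, ?_, by rwa [Real.dist_eq, abs_sub_comm]⟩
    have := hcomp {x} hMA
    rw [image_singleton, image_singleton, singleton_eq_singleton_iff] at this
    rwa [mem_preimage, mem_ofPred_eq, mem_singleton_iff.1 huM]
  -- otherwise `u` lies in a gap of `P ⁻¹' M`, with an endpoint between `θ` and `u`
  have hθ (k : ℤ) : θ + k ∉ P ⁻¹' M := by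
    rw [mem_preimage, hP.periodic_int]
    exact fun hθM ↦ hz ⟨M, ⟨hMA, hMo⟩, hθM⟩
  obtain ⟨a, b, hab, hta, hau, hub, hbt⟩ := exists_isGap (hMo.preimage hP.continuous) huM
    (hθ ⌊u - θ⌋) (hθ ⌈u - θ⌉) (by linarith [Int.floor_le (u - θ)])
    (by linarith [Int.le_ceil (u - θ)])
  have hend := hP.eq_of_isGap hG₁ hG₂ hlift₁ hlift₂ hMc.isPreconnected (hcomp M hMA) hab
  rcases le_or_gt θ u with hθu | huθ'
  · have : (0 : ℝ) ≤ ⌊u - θ⌋ := mod_cast Int.floor_nonneg.2 (sub_nonneg.2 hθu)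
    refine ⟨a, hend.1, ?_⟩
    rw [Real.dist_eq, abs_lt] at *
    constructor <;> linarith
  · have : (⌈u - θ⌉ : ℝ) ≤ 0 := mod_cast Int.ceil_le.2 (by push_cast; linarith)
    refine ⟨b, hend.2, ?_⟩
    rw [Real.dist_eq, abs_lt] at *
    constructor <;> linarith

end IsExpCover

namespace CircleDeg1Lift

theorem tendsto_iterate_div (f : CircleDeg1Lift) (x : ℝ) :
    Tendsto (fun n : ℕ ↦ f^[n] x / n) atTop (𝓝 (translationNumber f)) := by
  have := (f.tendsto_translationNumber x).add (tendsto_const_div_atTop_nhds_zero_nat x)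
  rw [add_zero] at this
  refine this.congr fun n ↦ ?_
  rw [coe_pow, sub_div, sub_add_cancel]

theorem eq_of_map_eq_map_add_int {f g : CircleDeg1Lift} (hf : StrictMono f)
    (hg : StrictMono g) {a b : ℝ} {m n : ℤ} (ha : f a = g a + m) (hb : f b = g b + n) : m = n := by
  -- move `b` into `[a, a + 1)`, where both `f` and `g` increase by less than `1`
  set b' := b - ⌊b - a⌋
  have hb' : f b' = g b' + n := by rw [map_sub_int, map_sub_int, hb]; ring
  have hab' : a ≤ b' := by linarith [Int.floor_le (b - a)]
  have hb'a : b' < a + 1 := by linarith [Int.lt_floor_add_one (b - a)]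
  have hf₁ := hf hb'a
  have hg₁ := hg hb'a
  rw [map_add_one] at hf₁ hg₁
  have hf₀ := hf.monotone hab'
  have hg₀ := hg.monotone hab'
  have h₁ : ((n - m : ℤ) : ℝ) < 1 := by push_cast; linarith
  have h₂ : (-1 : ℝ) < ((n - m : ℤ) : ℝ) := by push_cast; linarith
  have : n - m < 1 ∧ -1 < n - m := ⟨by exact_mod_cast h₁, by exact_mod_cast h₂⟩
  omega

theorem translationNumber_eq_add_int_s18 {f g : CircleDeg1Lift} {S : Set ℝ} (hS : MapsTo g S S)
    {x : ℝ} (hx : x ∈ S) {m : ℤ} (hfg : ∀ y ∈ S, f y = g y + m) :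
    translationNumber f = translationNumber g + m := by
  have horbit (n : ℕ) : (f ^ n) x = (g ^ n) x + (n * m : ℤ) := by
    induction n with
    | zero => simp
    | succ n ih =>
      have hmem : (g ^ n) x ∈ S := by rw [coe_pow]; exact hS.iterate n hx
      rw [pow_succ', mul_apply, ih, map_add_int, hfg _ hmem, pow_succ', mul_apply]
      push_cast
      ring
  have hlim := (g.tendsto_translationNumber x).add_const (m : ℝ)
  refine tendsto_nhds_unique (f.tendsto_translationNumber x) (hlim.congr' ?_)
  filter_upwards [eventually_ne_atTop 0] with n hn
  rw [horbit n]
  field_simp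
  push_cast
  ring

theorem exists_translationNumber_eq_add_int {f g : CircleDeg1Lift} (hf : StrictMono f)
    (hg : StrictMono g) {S : Set ℝ} (hS : MapsTo g S S) {x : ℝ} (hx : x ∈ S)
    (hint : ∀ y ∈ S, ∃ k : ℤ, f y = g y + k) :
    ∃ m : ℤ, translationNumber f = translationNumber g + m := by
  obtain ⟨m, hm⟩ := hint x hx
  refine ⟨m, translationNumber_eq_add_int_s18 hS hx fun y hy ↦ ?_⟩
  obtain ⟨k, hk⟩ := hint y hy
  rwa [eq_of_map_eq_map_add_int hf hg hm hk]

end CircleDeg1Lift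

theorem stmt18_general
    (A : Set (Set (sphere (0:ℂ) 1)))
    (hcard : ∃ J₁ J₂ J₃, J₁ ∈ A ∧ J₂ ∈ A ∧ J₃ ∈ A ∧
      J₁ ≠ J₂ ∧ J₁ ≠ J₃ ∧ J₂ ≠ J₃)
    (hdisj : A.PairwiseDisjoint id)
    (hdense : Dense (⋃₀ A))
    (hmem : ∀ J ∈ A, (∃ x, J = {x}) ∨ (IsOpen J ∧ IsConnected J))
    (h : Set (sphere (0:ℂ) 1) → Set (sphere (0:ℂ) 1))
    (hsurj : Set.SurjOn h A A)
    (g₁ g₂ : sphere (0:ℂ) 1 ≃ₜ sphere (0:ℂ) 1)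
    (hcomp₁ : ∀ J ∈ A, g₁ '' J = h J)
    (hcomp₂ : ∀ J ∈ A, g₂ '' J = h J)
    (P : ℝ → sphere (0:ℂ) 1)
    (hP : ∀ θ : ℝ, (P θ : ℂ) = Complex.exp (2 * Real.pi * θ * Complex.I))
    (G₁ G₂ : ℝ ≃ₜ ℝ)
    (hmono₁ : StrictMono G₁) (hmono₂ : StrictMono G₂)
    (hlift₁ : ∀ θ : ℝ, P (G₁ θ) = g₁ (P θ))
    (hlift₂ : ∀ θ : ℝ, P (G₂ θ) = g₂ (P θ))
    (x : ℝ) :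
    ∃ L₁ L₂ : ℝ,
      Tendsto (fun n : ℕ => (⇑G₁)^[n] x / (n : ℝ)) atTop (𝓝 L₁) ∧
      Tendsto (fun n : ℕ => (⇑G₂)^[n] x / (n : ℝ)) atTop (𝓝 L₂) ∧
      ∃ m : ℤ, L₁ - L₂ = (m : ℝ) := by
  have hP : IsExpCover P := hP
  let F₁ : CircleDeg1Lift := ⟨⟨G₁, hmono₁.monotone⟩, hP.map_add_one_of_semiconj hmono₁ hlift₁⟩
  let F₂ : CircleDeg1Lift := ⟨⟨G₂, hmono₂.monotone⟩, hP.map_add_one_of_semiconj hmono₂ hlift₂⟩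
  have : ConnectedSpace (sphere (0:ℂ) 1) := hP.surjective.connectedSpace hP.continuous
  obtain ⟨J₁, J₂, -, hJ₁, hJ₂, -, h₁₂, -, -⟩ := hcard
  have hne (J) (hJ : J ∈ A) : J.Nonempty := by
    rcases hmem J hJ with ⟨z, rfl⟩ | ⟨-, hJc⟩
    exacts [singleton_nonempty z, hJc.nonempty]
  obtain ⟨z, hz⟩ := remainder_nonempty hdisj hne hJ₁ hJ₂ h₁₂
  obtain ⟨θ, rfl⟩ := hP.surjective z
  have hEq := hP.eqOn_remainder hdense hmem
    (fun J hJ ↦ (hcomp₁ J hJ).trans (hcomp₂ J hJ).symm) hmono₁ hmono₂ hlift₁ hlift₂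
  obtain ⟨m, hm⟩ := CircleDeg1Lift.exists_translationNumber_eq_add_int (f := F₁) (g := F₂)
    hmono₁ hmono₂ (Semiconj.mapsTo_preimage hlift₂ (mapsTo_remainder hsurj hcomp₂)) hz
    fun y hy ↦ hP.eq_iff.1 ((hlift₁ y).trans ((hEq hy).trans (hlift₂ y).symm))
  exact ⟨_, _, F₁.tendsto_iterate_div x, F₂.tendsto_iterate_div x, m, by rw [hm]; ring⟩

/-- If `A` is a collection of at least 3 pairwise disjoint point-or-open-interval
connected subsets of `S¹` with dense union, `h : A → A` is a bijection, and
`g₁, g₂` are orientation-preserving circle homeomorphisms each compatible with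
`h` (i.e. `gᵢ(J) = h(J)` for all `J ∈ A`), then `g₁` and `g₂` have the same
rotation number (mod 1): with strictly increasing lifts `G₁, G₂` under the
covering `θ ↦ e^{2πiθ}`, the limits `Gᵢⁿ(x)/n` exist and differ by an
integer. -/
theorem stmt18
    (A : Set (Set (sphere (0:ℂ) 1)))
    (hcard : ∃ J₁ J₂ J₃, J₁ ∈ A ∧ J₂ ∈ A ∧ J₃ ∈ A ∧
      J₁ ≠ J₂ ∧ J₁ ≠ J₃ ∧ J₂ ≠ J₃)
    (hdisj : A.PairwiseDisjoint id)
    (hdense : Dense (⋃₀ A))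
    (hmem : ∀ J ∈ A, (∃ x, J = {x}) ∨ (IsOpen J ∧ IsConnected J))
    (h : Set (sphere (0:ℂ) 1) → Set (sphere (0:ℂ) 1))
    (hmaps : Set.MapsTo h A A) (hinj : Set.InjOn h A) (hsurj : Set.SurjOn h A A)
    (g₁ g₂ : sphere (0:ℂ) 1 ≃ₜ sphere (0:ℂ) 1)
    (hcomp₁ : ∀ J ∈ A, g₁ '' J = h J)
    (hcomp₂ : ∀ J ∈ A, g₂ '' J = h J)
    (P : ℝ → sphere (0:ℂ) 1)
    (hP : ∀ θ : ℝ, (P θ : ℂ) = Complex.exp (2 * Real.pi * θ * Complex.I))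
    (G₁ G₂ : ℝ ≃ₜ ℝ)
    (hmono₁ : StrictMono G₁) (hmono₂ : StrictMono G₂)
    (hlift₁ : ∀ θ : ℝ, P (G₁ θ) = g₁ (P θ))
    (hlift₂ : ∀ θ : ℝ, P (G₂ θ) = g₂ (P θ))
    (x : ℝ) :
    ∃ L₁ L₂ : ℝ,
      Tendsto (fun n : ℕ => (⇑G₁)^[n] x / (n : ℝ)) atTop (𝓝 L₁) ∧
      Tendsto (fun n : ℕ => (⇑G₂)^[n] x / (n : ℝ)) atTop (𝓝 L₂) ∧
      ∃ m : ℤ, L₁ - L₂ = (m : ℝ) :=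
  stmt18_general A hcard hdisj hdense hmem h hsurj g₁ g₂ hcomp₁ hcomp₂ P hP G₁ G₂ hmono₁ hmono₂
    hlift₁ hlift₂ x
end

section
/- Let U ⊆ ℝ² be the interior of the Warsaw circle, with the impression of the bad prime end equal to the limit segment {0} × [−1,1] ⊆ ∂U. Define H : Ū × ℝ → Ū × ℝ by H(x,y,t) = (x,y, y+t). Then H is a homeomorphism with H(U × ℝ) = U × ℝ, but the conjugate Ψ H Ψ⁻¹ : int(D²) × ℝ → int(D²) × ℝ (where Ψ(u,t) = (ψ(u), t) for a conformal map ψ : U → int(D²)) does not extend to a continuous map of D² × ℝ. -/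
/-!
The shear `(z, t) ↦ (z, Im z + t)` preserves every cylinder `S × ℝ`, so it is a homeomorphism
of `Ū × ℝ` restricting to one of `U × ℝ`. Its conjugate by the Riemann map is
`(w, t) ↦ (w, Im φ(w) + t)`. A continuous extension `F` to the closed disk would give
`F(w₀, 0) = (w₀, Im z)` for every point `z` of the impression of the prime end at `w₀`;
since the impression contains both `i` and `-i`, this forces `1 = -1`.
-/

open Metric Set Filter Topology

section Shear

variable {X G : Type*} [AddGroup G]

theorem shear_injective (g : X → G) :
    Function.Injective fun p : X × G => (p.1, g p.1 + p.2) := by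
  rintro ⟨x, t⟩ ⟨x', t'⟩ h
  obtain ⟨rfl, ht⟩ := Prod.ext_iff.mp h
  simpa using ht

theorem image_shear_prod_univ (g : X → G) (S : Set X) :
    (fun p : X × G => (p.1, g p.1 + p.2)) '' (S ×ˢ univ) = S ×ˢ univ := by
  ext p
  constructor
  · rintro ⟨q, ⟨hq, -⟩, rfl⟩
    exact ⟨hq, trivial⟩
  · rintro ⟨hp, -⟩
    exact ⟨(p.1, -g p.1 + p.2), ⟨hp, trivial⟩, by simp⟩

theorem bijOn_shear_prod_univ (g : X → G) (S : Set X) :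
    BijOn (fun p : X × G => (p.1, g p.1 + p.2)) (S ×ˢ univ) (S ×ˢ univ) := by
  simpa only [image_shear_prod_univ] using
    (shear_injective g).injOn.bijOn_image (s := S ×ˢ univ)

end Shear

section ShearExtension

variable {X G : Type*} [TopologicalSpace X] [TopologicalSpace G] [T2Space G] [AddZeroClass G]

theorem ContinuousWithinAt.snd_eq_of_tendsto_shear {F : X × G → X × G} {s : Set X}
    {g : X → G} {x₀ : X} {u : ℕ → X} {a : G}
    (hF : ContinuousWithinAt F (s ×ˢ univ) (x₀, 0)) (hFs : ∀ w ∈ s, F (w, 0) = (w, g w))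
    (hu : ∀ n, u n ∈ s) (hux : Tendsto u atTop (𝓝 x₀))
    (hga : Tendsto (fun n => g (u n)) atTop (𝓝 a)) :
    (F (x₀, 0)).2 = a := by
  have hu0 : Tendsto (fun n => (u n, (0 : G))) atTop (𝓝[s ×ˢ univ] (x₀, 0)) :=
    tendsto_nhdsWithin_iff.mpr
      ⟨hux.prodMk_nhds tendsto_const_nhds, .of_forall fun n => ⟨hu n, trivial⟩⟩
  have hFu : Tendsto (fun n => (F (u n, 0)).2) atTop (𝓝 (F (x₀, 0)).2) :=
    (continuous_snd.tendsto _).comp (hF.tendsto.comp hu0)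
  refine tendsto_nhds_unique hFu ?_
  simpa only [hFs _ (hu _)] using hga

theorem not_continuousWithinAt_shear_of_tendsto_ne {F : X × G → X × G} {s : Set X}
    {g : X → G} {x₀ : X} {u v : ℕ → X} {a b : G} (hab : a ≠ b)
    (hFs : ∀ w ∈ s, F (w, 0) = (w, g w))
    (hu : ∀ n, u n ∈ s) (hux : Tendsto u atTop (𝓝 x₀))
    (hga : Tendsto (fun n => g (u n)) atTop (𝓝 a))
    (hv : ∀ n, v n ∈ s) (hvx : Tendsto v atTop (𝓝 x₀))
    (hgb : Tendsto (fun n => g (v n)) atTop (𝓝 b)) :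
    ¬ ContinuousWithinAt F (s ×ˢ univ) (x₀, 0) := fun hF =>
  hab <| (hF.snd_eq_of_tendsto_shear hFs hu hux hga).symm.trans
    (hF.snd_eq_of_tendsto_shear hFs hv hvx hgb)

end ShearExtension

theorem stmt19_general
    (U : Set ℂ)
    (φ : ℂ → ℂ)
    -- the impression of the bad prime end is exactly the limit segment
    (himp : ∃ w₀ ∈ sphere (0:ℂ) 1,
      {z : ℂ | z.re = 0 ∧ z.im ∈ Icc (-1:ℝ) 1} =
        {z : ℂ | ∃ s : ℕ → ℂ, (∀ n, s n ∈ ball (0:ℂ) 1) ∧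
          Tendsto s atTop (𝓝 w₀) ∧ Tendsto (fun n => φ (s n)) atTop (𝓝 z)})
    (H : ℂ × ℝ → ℂ × ℝ)
    (hH : ∀ p : ℂ × ℝ, H p = (p.1, p.1.im + p.2)) :
    Continuous H ∧
    Set.BijOn H (closure U ×ˢ (univ : Set ℝ)) (closure U ×ˢ (univ : Set ℝ)) ∧
    H '' (U ×ˢ (univ : Set ℝ)) = U ×ˢ (univ : Set ℝ) ∧
    ¬ ∃ F : ℂ × ℝ → ℂ × ℝ,
        ContinuousOn F (closedBall (0:ℂ) 1 ×ˢ (univ : Set ℝ)) ∧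
        ∀ w ∈ ball (0:ℂ) 1, ∀ t : ℝ, F (w, t) = (w, (φ w).im + t) := by
  obtain rfl : H = fun p => (p.1, p.1.im + p.2) := funext hH
  refine ⟨by fun_prop, bijOn_shear_prod_univ _ _, image_shear_prod_univ _ _, ?_⟩
  rintro ⟨F, hF, hFball⟩
  obtain ⟨w₀, hw₀, himp⟩ := himp
  have hI : Complex.I ∈ {z : ℂ | z.re = 0 ∧ z.im ∈ Icc (-1:ℝ) 1} := by simp
  have hnegI : -Complex.I ∈ {z : ℂ | z.re = 0 ∧ z.im ∈ Icc (-1:ℝ) 1} := by simp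
  rw [himp] at hI hnegI
  obtain ⟨u, hu, hux, huI⟩ := hI
  obtain ⟨v, hv, hvx, hvI⟩ := hnegI
  have hFs : ∀ w ∈ ball (0:ℂ) 1, F (w, 0) = (w, (φ w).im) := fun w hw => by
    rw [hFball w hw 0, add_zero]
  have hF₀ : ContinuousWithinAt F (ball (0:ℂ) 1 ×ˢ univ) (w₀, 0) :=
    (hF _ ⟨sphere_subset_closedBall hw₀, trivial⟩).mono
      (prod_mono ball_subset_closedBall subset_rfl)
  refine not_continuousWithinAt_shear_of_tendsto_ne (show (1 : ℝ) ≠ -1 by norm_num) hFs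
    hu hux ?_ hv hvx ?_ hF₀
  · simpa [Function.comp_def] using (Complex.continuous_im.tendsto _).comp huI
  · simpa [Function.comp_def] using (Complex.continuous_im.tendsto _).comp hvI

/-- Warsaw-circle example. Let `U ⊆ ℂ` be the interior of the Warsaw circle,
`ψ : U → int D²` a conformal (Riemann) map with inverse `φ`, such that the
impression of the bad prime end is the limit segment `{0} × [−1,1] ⊆ ∂U`.
The map `H(z,t) = (z, Im z + t)` is a homeomorphism of `Ū × ℝ` with
`H(U × ℝ) = U × ℝ`, but the conjugate `Ψ H Ψ⁻¹ : (w,t) ↦ (w, Im(φ w) + t)`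
does not extend to a continuous map of `D² × ℝ`. -/
theorem stmt19
    (U : Set ℂ)
    (hUopen : IsOpen U) (hUbd : Bornology.IsBounded U) (hUconn : IsConnected U)
    -- the sin(1/x) curve lies in the boundary of U
    (hsin : {z : ℂ | ∃ x : ℝ, 0 < x ∧ x ≤ 1 ∧
        z = (x : ℂ) + (Real.sin (1 / x) : ℂ) * Complex.I} ⊆ closure U \ U)
    -- the limit segment {0} × [−1,1] lies in the boundary of U
    (hseg : {z : ℂ | z.re = 0 ∧ z.im ∈ Icc (-1:ℝ) 1} ⊆ closure U \ U)
    -- ψ is a conformal homeomorphism from U onto the open unit disk, φ its inverse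
    (ψ φ : ℂ → ℂ)
    (hψdiff : DifferentiableOn ℂ ψ U)
    (hψinj : Set.InjOn ψ U)
    (hψsurj : ψ '' U = ball (0:ℂ) 1)
    (hφψ : ∀ z ∈ U, φ (ψ z) = z)
    (hψφ : ∀ w ∈ ball (0:ℂ) 1, φ w ∈ U ∧ ψ (φ w) = w)
    -- the impression of the bad prime end is exactly the limit segment
    (himp : ∃ w₀ ∈ sphere (0:ℂ) 1,
      {z : ℂ | z.re = 0 ∧ z.im ∈ Icc (-1:ℝ) 1} =
        {z : ℂ | ∃ s : ℕ → ℂ, (∀ n, s n ∈ ball (0:ℂ) 1) ∧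
          Tendsto s atTop (𝓝 w₀) ∧ Tendsto (fun n => φ (s n)) atTop (𝓝 z)})
    (H : ℂ × ℝ → ℂ × ℝ)
    (hH : ∀ p : ℂ × ℝ, H p = (p.1, p.1.im + p.2)) :
    Continuous H ∧
    Set.BijOn H (closure U ×ˢ (univ : Set ℝ)) (closure U ×ˢ (univ : Set ℝ)) ∧
    H '' (U ×ˢ (univ : Set ℝ)) = U ×ˢ (univ : Set ℝ) ∧
    ¬ ∃ F : ℂ × ℝ → ℂ × ℝ,
        ContinuousOn F (closedBall (0:ℂ) 1 ×ˢ (univ : Set ℝ)) ∧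
        ∀ w ∈ ball (0:ℂ) 1, ∀ t : ℝ, F (w, t) = (w, (φ w).im + t) :=
  stmt19_general U φ himp H hH
end
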